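/- With σ₁,…,σ_{w−1}, τ as above, the permutation σ = (τ σ_{w−1}⋯σ₂σ₁σ₂⋯σ_{w−1})² of {0,1}^n flips coordinate c of x if and only if (x_{j₁},…,x_{j_w}) = (b₁,…,b_w), and leaves all other coordinates (including the scratch coordinates s₁,…,s_{w−1}) unchanged; i.e., σ is a w-controlled NOT gate implemented by 4(w−1)+2 = O(w) width-2 simple permutations. -/

import Mathlib

/-!
The ladder `σ_{w-1} ⋯ σ₂ σ₁ σ₂ ⋯ σ_{w-1}` XORs into each scratch bit `s_t` the indicator `P_t`
of `(x_{j₁}, …, x_{j_t}) = (b₁, …, b_t)` and changes nothing else. By induction on its height: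
the ladder up to `σ_k` is `σ_k` composed on both sides with the ladder up to `σ_{k-1}`, and the
two copies of `σ_k` toggle `s_k` by `a ∧ e` and `(a ⊕ P_{k-1}) ∧ e`, where `a = x_{s_{k-1}}` and
`e = [x_{j_k} = b_k]`; these add up to `P_{k-1} ∧ e = P_k`. Since `P_t` reads only the controls,
the second pass of the ladder restores the scratch bits, so `τ` toggles `c` first by
`(a ⊕ P_{w-1}) ∧ e` and then by `a ∧ e`, in total by `P_{w-1} ∧ e = P_w`.
-/

/-- The permutation of {0,1}^n that flips coordinate s iff `cond` holds of the input. -/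
def flipIf {n : ℕ} (s : Fin n) (cond : (Fin n → Bool) → Bool) :
    (Fin n → Bool) → (Fin n → Bool) :=
  fun x m => if m = s then xor (x s) (cond x) else x m

section FlipIf

variable {n : ℕ} {s m : Fin n} {cond : (Fin n → Bool) → Bool} {x : Fin n → Bool}

@[simp]
theorem flipIf_apply_self : flipIf s cond x s = (x s ^^ cond x) := if_pos rfl

theorem flipIf_apply_of_ne (hm : m ≠ s) : flipIf s cond x m = x m := if_neg hm

end FlipIf

theorem Bool.xor_and_xor_xor_and (x a p e : Bool) :
    ((x ^^ (a && e)) ^^ ((a ^^ p) && e)) = (x ^^ (p && e)) := by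
  cases x <;> cases a <;> cases p <;> cases e <;> rfl

namespace ControlledNot

variable {n v : ℕ} (j : Fin (v + 1) → Fin n) (s : Fin v → Fin n) (b : Fin (v + 1) → Bool)

/-- Indices start at `0`: `prefixMatch j b x t` is `P_{t+1}` and `controlStep t` is `σ_{t+1}`. -/
def prefixMatch (x : Fin n → Bool) (t : ℕ) : Bool :=
  decide (∀ u : Fin (v + 1), (u : ℕ) ≤ t → x (j u) = b u)

def controlStep (t : ℕ) : (Fin n → Bool) → (Fin n → Bool) :=
  if h : t < v then
    flipIf (s ⟨t, h⟩)
      (fun x =>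
        (decide (t = 0) || x (s ⟨t - 1, lt_of_le_of_lt (Nat.sub_le t 1) h⟩))
        && (x (j ⟨t, Nat.lt_succ_of_lt h⟩) == b ⟨t, Nat.lt_succ_of_lt h⟩))
  else id

/-- `ladder k` applies `controlStep (k-1), …, controlStep 0, controlStep 1, …, controlStep (k-1)`
in this order. -/
def ladder (k : ℕ) (x : Fin n → Bool) : Fin n → Bool :=
  ((List.range k).reverse ++ List.range' 1 (k - 1)).foldl (fun y t => controlStep j s b t y) x

def ladderMask (k : ℕ) (x : Fin n → Bool) (m : Fin n) : Bool :=
  decide (∃ t : Fin v, (t : ℕ) < k ∧ s t = m ∧ prefixMatch j b x t)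

/-- `τ σ_{w-1} ⋯ σ₁ ⋯ σ_{w-1}`, whose square is the controlled NOT gate. -/
def cnotHalf (hv : 0 < v) (c : Fin n) (x : Fin n → Bool) : Fin n → Bool :=
  flipIf c (fun x =>
      x (s ⟨v - 1, Nat.sub_one_lt hv.ne'⟩) && (x (j ⟨v, v.lt_succ_self⟩) == b ⟨v, v.lt_succ_self⟩))
    (ladder j s b v x)

variable {j s b}

theorem prefixMatch_congr {x y : Fin n → Bool} (h : ∀ u, x (j u) = y (j u)) (t : ℕ) :
    prefixMatch j b x t = prefixMatch j b y t := by
  simp only [prefixMatch, h]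

theorem prefixMatch_zero (x : Fin n → Bool) : prefixMatch j b x 0 = (x (j 0) == b 0) := by
  simp [prefixMatch, Bool.beq_eq_decide_eq]

theorem prefixMatch_of_pos (x : Fin n → Bool) {t : ℕ} (ht : 0 < t) (h : t < v + 1) :
    prefixMatch j b x t = (prefixMatch j b x (t - 1) && (x (j ⟨t, h⟩) == b ⟨t, h⟩)) := by
  simp only [prefixMatch, Bool.beq_eq_decide_eq, ← Bool.decide_and, decide_eq_decide]
  refine ⟨fun hx => ⟨fun u hu => hx u (by omega), hx _ le_rfl⟩, fun ⟨hx, hxt⟩ u hu => ?_⟩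
  rcases Nat.lt_or_eq_of_le hu with hu | hu
  · exact hx u (by omega)
  · rwa [show u = ⟨t, h⟩ from Fin.ext hu]

theorem prefixMatch_last (x : Fin n → Bool) :
    prefixMatch j b x v = decide (∀ u, x (j u) = b u) := by
  simp [prefixMatch, Fin.is_le]

theorem controlStep_apply_of_ne {t : ℕ} {m : Fin n} (hm : ∀ ht : t < v, m ≠ s ⟨t, ht⟩)
    (x : Fin n → Bool) : controlStep j s b t x m = x m := by
  unfold controlStep
  split_ifs with ht
  · exact flipIf_apply_of_ne (hm ht)
  · rfl

theorem controlStep_zero_apply_self (hv : 0 < v) (x : Fin n → Bool) :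
    controlStep j s b 0 x (s ⟨0, hv⟩) = (x (s ⟨0, hv⟩) ^^ prefixMatch j b x 0) := by
  simp [controlStep, hv, prefixMatch_zero]

theorem controlStep_apply_self_of_pos {t : ℕ} (ht : 0 < t) (htv : t < v) (x : Fin n → Bool) :
    controlStep j s b t x (s ⟨t, htv⟩) = (x (s ⟨t, htv⟩) ^^
      (x (s ⟨t - 1, by omega⟩) && (x (j ⟨t, by omega⟩) == b ⟨t, by omega⟩))) := by
  simp [controlStep, htv, ht.ne']

theorem ladder_succ {k : ℕ} (hk : 0 < k) (x : Fin n → Bool) :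
    ladder j s b (k + 1) x = controlStep j s b k (ladder j s b k (controlStep j s b k x)) := by
  obtain ⟨k, rfl⟩ := Nat.exists_eq_add_of_lt hk
  simp [ladder, List.range_succ, List.range'_concat, Nat.add_comm 1]

theorem ladder_apply_of_forall_ne {k : ℕ} {m : Fin n} (hm : ∀ t : Fin v, (t : ℕ) < k → s t ≠ m)
    (x : Fin n → Bool) : ladder j s b k x m = x m := by
  induction k generalizing x with
  | zero => rfl
  | succ k ih =>
    have hk : ∀ hk : k < v, m ≠ s ⟨k, hk⟩ := fun hk h => hm ⟨k, hk⟩ (Nat.lt_succ_self k) h.symm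
    rcases Nat.eq_zero_or_pos k with rfl | hpos
    · exact controlStep_apply_of_ne hk x
    · rw [ladder_succ hpos, controlStep_apply_of_ne hk, ih (fun t ht => hm t (by omega)),
        controlStep_apply_of_ne hk]

theorem ladder_apply_self (hs : Function.Injective s) (hjs : ∀ a a', j a ≠ s a') {k : ℕ}
    (x : Fin n → Bool) (t : Fin v) (ht : (t : ℕ) < k) :
    ladder j s b k x (s t) = (x (s t) ^^ prefixMatch j b x t) := by
  induction k generalizing x t with
  | zero => omega
  | succ k ih =>
    have hs_ne : ∀ {a a' : Fin v}, (a : ℕ) ≠ a' → s a ≠ s a' := fun h => hs.ne (Fin.ne_of_val_ne h)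
    have hj_fix : ∀ y u, controlStep j s b k y (j u) = y (j u) :=
      fun y u => controlStep_apply_of_ne (fun _ => hjs u _) y
    rcases Nat.eq_zero_or_pos k with rfl | hpos
    · rw [show t = ⟨0, t.pos⟩ from Fin.ext (by simpa using ht)]
      exact controlStep_zero_apply_self t.pos x
    rw [ladder_succ hpos]
    rcases Nat.lt_succ_iff_lt_or_eq.mp ht with ht | rfl
    · rw [controlStep_apply_of_ne (fun _ => hs_ne (by simp; omega)), ih _ t ht,
        controlStep_apply_of_ne (fun _ => hs_ne (by simp; omega)), prefixMatch_congr (hj_fix x)]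
    · have hjt : ∀ u, ladder j s b t (controlStep j s b t x) (j u) = x (j u) := fun u => by
        rw [ladder_apply_of_forall_ne (fun _ _ => (hjs u _).symm), hj_fix]
      rw [controlStep_apply_self_of_pos hpos t.isLt, hjt,
        ladder_apply_of_forall_ne (fun _ h => hs_ne (by simp; omega)),
        ih _ ⟨t - 1, by omega⟩ (by simp; omega), controlStep_apply_self_of_pos hpos t.isLt,
        controlStep_apply_of_ne (fun _ => hs_ne (by simp; omega)),
        prefixMatch_congr (hj_fix x), prefixMatch_of_pos x hpos]
      exact Bool.xor_and_xor_xor_and _ _ _ _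

theorem ladderMask_congr {x y : Fin n → Bool} (h : ∀ u, x (j u) = y (j u)) (k : ℕ) :
    ladderMask j s b k x = ladderMask j s b k y := by
  funext m
  simp only [ladderMask, prefixMatch_congr h]

theorem ladder_apply (hs : Function.Injective s) (hjs : ∀ a a', j a ≠ s a') (k : ℕ)
    (x : Fin n → Bool) (m : Fin n) : ladder j s b k x m = (x m ^^ ladderMask j s b k x m) := by
  by_cases hm : ∃ t : Fin v, (t : ℕ) < k ∧ s t = m
  · obtain ⟨t, ht, rfl⟩ := hm
    simp [ladder_apply_self hs hjs x t ht, ladderMask, hs.eq_iff, ht]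
  · push Not at hm
    rw [ladder_apply_of_forall_ne hm, ladderMask,
      decide_eq_false fun ⟨t, ht, hts, _⟩ => hm t ht hts, Bool.xor_false]

section CnotHalf

variable {hv : 0 < v} {c : Fin n}

theorem cnotHalf_apply_of_ne {m : Fin n} (hm : m ≠ c) (x : Fin n → Bool) :
    cnotHalf j s b hv c x m = ladder j s b v x m :=
  flipIf_apply_of_ne hm

theorem cnotHalf_apply_control (hjs : ∀ a a', j a ≠ s a') (hjc : ∀ a, j a ≠ c)
    (x : Fin n → Bool) (u : Fin (v + 1)) : cnotHalf j s b hv c x (j u) = x (j u) := by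
  rw [cnotHalf_apply_of_ne (hjc u), ladder_apply_of_forall_ne fun _ _ => (hjs u _).symm]

theorem cnotHalf_apply_target (hs : Function.Injective s) (hjs : ∀ a a', j a ≠ s a')
    (hsc : ∀ a, s a ≠ c) (x : Fin n → Bool) :
    cnotHalf j s b hv c x c =
      (x c ^^ ((x (s ⟨v - 1, Nat.sub_one_lt hv.ne'⟩) ^^ prefixMatch j b x (v - 1))
        && (x (j ⟨v, v.lt_succ_self⟩) == b ⟨v, v.lt_succ_self⟩))) := by
  rw [cnotHalf, flipIf_apply_self, ladder_apply_of_forall_ne fun t _ => hsc t,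
    ladder_apply_self hs hjs x ⟨v - 1, Nat.sub_one_lt hv.ne'⟩ (Nat.sub_one_lt hv.ne'),
    ladder_apply_of_forall_ne fun _ _ => (hjs _ _).symm]

theorem cnotHalf_cnotHalf (hs : Function.Injective s) (hjs : ∀ a a', j a ≠ s a')
    (hjc : ∀ a, j a ≠ c) (hsc : ∀ a, s a ≠ c) (x : Fin n → Bool) :
    cnotHalf j s b hv c (cnotHalf j s b hv c x)
      = flipIf c (fun y => decide (∀ t : Fin (v + 1), y (j t) = b t)) x := by
  have hcontrol := cnotHalf_apply_control (b := b) (hv := hv) hjs hjc x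
  funext m
  by_cases hm : m = c
  · subst hm
    rw [cnotHalf_apply_target hs hjs hsc, cnotHalf_apply_target hs hjs hsc,
      cnotHalf_apply_of_ne (hsc _),
      ladder_apply_self hs hjs x ⟨v - 1, Nat.sub_one_lt hv.ne'⟩ (Nat.sub_one_lt hv.ne'),
      prefixMatch_congr hcontrol, hcontrol, flipIf_apply_self, ← prefixMatch_last,
      prefixMatch_of_pos x hv (by omega)]
    exact Bool.xor_and_xor_xor_and _ _ _ _
  · rw [flipIf_apply_of_ne hm, cnotHalf_apply_of_ne hm, ladder_apply hs hjs,
      ladderMask_congr hcontrol, cnotHalf_apply_of_ne hm, ladder_apply hs hjs, Bool.xor_assoc,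
      Bool.xor_self, Bool.xor_false]

end CnotHalf

end ControlledNot

/-- With distinct indices j₁,…,j_w, s₁,…,s_{w-1}, c (here w = v+1, 0-indexed) and bits
b₁,…,b_w, let σ_t flip s_t iff (t = 0 or x_{s_{t-1}} = 1) and x_{j_t} = b_t, and let
τ flip c iff x_{s_{w-1}} = 1 and x_{j_w} = b_w. Then the permutation
σ = (τ σ_{w-1}⋯σ₂σ₁σ₂⋯σ_{w-1})² flips coordinate c iff
(x_{j₁},…,x_{j_w}) = (b₁,…,b_w), and leaves all other coordinates (including the
scratch coordinates s₁,…,s_{w-1}) unchanged: a w-controlled NOT gate. -/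
theorem controlled_not_implementation
    {n v : ℕ} (hv : 0 < v) (j : Fin (v + 1) → Fin n) (s : Fin v → Fin n) (c : Fin n)
    (b : Fin (v + 1) → Bool)
    (hs : Function.Injective s)
    (hjs : ∀ a b', j a ≠ s b') (hjc : ∀ a, j a ≠ c) (hsc : ∀ a, s a ≠ c) :
    let σ : ℕ → (Fin n → Bool) → (Fin n → Bool) := fun t =>
      if h : t < v then
        flipIf (s ⟨t, h⟩)
          (fun x =>
            (decide (t = 0) || x (s ⟨t - 1, lt_of_le_of_lt (Nat.sub_le t 1) h⟩))
            && (x (j ⟨t, Nat.lt_succ_of_lt h⟩) == b ⟨t, Nat.lt_succ_of_lt h⟩))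
      else id
    let τ : (Fin n → Bool) → (Fin n → Bool) :=
      flipIf c (fun x =>
        x (s ⟨v - 1, by omega⟩) && (x (j ⟨v, by omega⟩) == b ⟨v, by omega⟩))
    let F : (Fin n → Bool) → (Fin n → Bool) := fun x =>
      τ (((List.range v).reverse ++ List.range' 1 (v - 1)).foldl (fun y t => σ t y) x)
    ∀ x, F (F x)
        = flipIf c (fun y => decide (∀ t : Fin (v + 1), y (j t) = b t)) x := by
  intro σ τ F x
  exact ControlledNot.cnotHalf_cnotHalf (hv := hv) hs hjs hjc hsc x
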